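/- arXiv:2208.07918 — 4 statements merged into one kernel-verified Lean document; each statement's English description precedes it below -/
import Mathlib

section
/- For any unaware classifier g, the aggregate difference in misclassification rates Δ_mis(g) := |P(g(X)≠Y | S=1) − P(g(X)≠Y | S=0)| satisfies Δ_mis(g) ≤ (1/2)·E_{x∼P_1}[r(x)] + (1/2)·E_{x∼P_0}[r(x)] + TV(P_1, P_0), where P_s is the distribution of X conditional on S=s and TV is the total variation distance. -/
open MeasureTheory

private lemma tv_bound_aux {𝒳 : Type*} [MeasurableSpace 𝒳]
    (P₀ P₁ : Measure 𝒳) [IsProbabilityMeasure P₀] [IsProbabilityMeasure P₁]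
    (f : 𝒳 → ℝ) (hf : Measurable f) (h0 : ∀ x, 0 ≤ f x) (h1 : ∀ x, f x ≤ 1) :
    |(∫ x, f x ∂P₁) - ∫ x, f x ∂P₀|
      ≤ ⨆ A : {A : Set 𝒳 // MeasurableSet A}, |(P₁ A.1).toReal - (P₀ A.1).toReal| := by
  set tv := ⨆ A : {A : Set 𝒳 // MeasurableSet A}, |(P₁ A.1).toReal - (P₀ A.1).toReal| with htv
  have hbdd : BddAbove (Set.range fun A : {A : Set 𝒳 // MeasurableSet A} =>
      |(P₁ A.1).toReal - (P₀ A.1).toReal|) := by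
    refine ⟨2, ?_⟩
    rintro y ⟨A, rfl⟩
    have h1' : (P₁ A.1).toReal ≤ 1 := by
      simpa using ENNReal.toReal_mono (by simp) (prob_le_one (μ := P₁) (s := A.1))
    have h0' : (P₀ A.1).toReal ≤ 1 := by
      simpa using ENNReal.toReal_mono (by simp) (prob_le_one (μ := P₀) (s := A.1))
    have := abs_sub_abs_le_abs_sub ((P₁ A.1).toReal) ((P₀ A.1).toReal)
    calc |(P₁ A.1).toReal - (P₀ A.1).toReal| ≤ |(P₁ A.1).toReal| + |(P₀ A.1).toReal| :=
          abs_sub _ _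
      _ ≤ 1 + 1 := by
          gcongr
          · rwa [abs_of_nonneg ENNReal.toReal_nonneg]
          · rwa [abs_of_nonneg ENNReal.toReal_nonneg]
      _ = 2 := by norm_num
  have hAle : ∀ A : Set 𝒳, MeasurableSet A → |(P₁ A).toReal - (P₀ A).toReal| ≤ tv := by
    intro A hA
    exact le_ciSup hbdd ⟨A, hA⟩
  -- integrability of f
  have hint : ∀ (μ : Measure 𝒳) [IsProbabilityMeasure μ], Integrable f μ := by
    intro μ _
    refine (integrable_const (1 : ℝ)).mono' hf.aestronglyMeasurable ?_
    filter_upwards with x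
    rw [Real.norm_eq_abs, abs_of_nonneg (h0 x)]
    exact h1 x
  -- layer cake
  have key : ∀ (μ : Measure 𝒳) [IsProbabilityMeasure μ],
      ∫ x, f x ∂μ = ∫ t in Set.Ioi (0:ℝ), (μ {a | t < f a}).toReal := by
    intro μ _
    exact (hint μ).integral_eq_integral_meas_lt (Filter.Eventually.of_forall h0)
  set F₁ : ℝ → ℝ := fun t => (P₁ {a | t < f a}).toReal with hF₁
  set F₀ : ℝ → ℝ := fun t => (P₀ {a | t < f a}).toReal with hF₀
  have hanti : ∀ (μ : Measure 𝒳) [IsProbabilityMeasure μ],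
      Antitone (fun t => (μ {a | t < f a}).toReal) := by
    intro μ _ s t hst
    refine ENNReal.toReal_mono (measure_ne_top _ _) (measure_mono ?_)
    intro a ha
    exact lt_of_le_of_lt hst ha
  have hFle1 : ∀ (μ : Measure 𝒳) [IsProbabilityMeasure μ] (t : ℝ),
      (μ {a | t < f a}).toReal ≤ 1 := by
    intro μ _ t
    simpa using ENNReal.toReal_mono (by simp) (prob_le_one (μ := μ) (s := {a | t < f a}))
  have hF0 : ∀ (μ : Measure 𝒳) (t : ℝ), 1 ≤ t → μ {a | t < f a} = 0 := by
    intro μ t ht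
    convert measure_empty (μ := μ)
    ext a
    simp only [Set.mem_setOf_eq, Set.mem_empty_iff_false, iff_false, not_lt]
    exact (h1 a).trans ht
  -- integrability of F₁ F₀ on Ioi 0
  have hindint : Integrable ((Set.Ioc (0:ℝ) 1).indicator (fun _ => (1:ℝ)))
      (volume.restrict (Set.Ioi (0:ℝ))) := by
    refine Integrable.restrict ?_
    rw [integrable_indicator_iff measurableSet_Ioc]
    exact (integrableOn_const_iff).mpr (Or.inr (by simp))
  have hFint : ∀ (μ : Measure 𝒳) [IsProbabilityMeasure μ],
      Integrable (fun t => (μ {a | t < f a}).toReal) (volume.restrict (Set.Ioi (0:ℝ))) := by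
    intro μ _
    refine hindint.mono' ((hanti μ).measurable).aestronglyMeasurable ?_
    filter_upwards [ae_restrict_mem measurableSet_Ioi] with t ht
    rw [Real.norm_eq_abs, abs_of_nonneg ENNReal.toReal_nonneg]
    by_cases h : t ≤ 1
    · rw [Set.indicator_of_mem (Set.mem_Ioc.mpr ⟨ht, h⟩)]
      exact hFle1 μ t
    · rw [Set.indicator_of_notMem (fun hm => h hm.2)]
      simp [hF0 μ t (le_of_lt (not_le.mp h))]
  -- main estimate
  rw [key P₁, key P₀, ← integral_sub (hFint P₁) (hFint P₀)]
  have hbound : ∀ᵐ t ∂(volume.restrict (Set.Ioi (0:ℝ))),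
      ‖(P₁ {a | t < f a}).toReal - (P₀ {a | t < f a}).toReal‖
        ≤ (Set.Ioc (0:ℝ) 1).indicator (fun _ => tv) t := by
    filter_upwards [ae_restrict_mem measurableSet_Ioi] with t ht
    by_cases h : t ≤ 1
    · rw [Set.indicator_of_mem (Set.mem_Ioc.mpr ⟨ht, h⟩), Real.norm_eq_abs]
      exact hAle _ (hf measurableSet_Ioi)
    · rw [Set.indicator_of_notMem (fun hm => h hm.2)]
      simp [hF0 P₁ t (le_of_lt (not_le.mp h)), hF0 P₀ t (le_of_lt (not_le.mp h))]
  have htvnn : 0 ≤ tv := by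
    have := hAle ∅ MeasurableSet.empty
    have h0' : (0:ℝ) ≤ |(P₁ (∅ : Set 𝒳)).toReal - (P₀ (∅ : Set 𝒳)).toReal| := abs_nonneg _
    linarith
  have hindtv : Integrable ((Set.Ioc (0:ℝ) 1).indicator (fun _ => tv))
      (volume.restrict (Set.Ioi (0:ℝ))) := by
    refine Integrable.restrict ?_
    rw [integrable_indicator_iff measurableSet_Ioc]
    exact (integrableOn_const_iff).mpr (Or.inr (by simp))
  calc |∫ t in Set.Ioi (0:ℝ), ((P₁ {a | t < f a}).toReal - (P₀ {a | t < f a}).toReal)|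
      ≤ ∫ t in Set.Ioi (0:ℝ), (Set.Ioc (0:ℝ) 1).indicator (fun _ => tv) t := by
        rw [← Real.norm_eq_abs]
        exact norm_integral_le_of_norm_le hindtv hbound
    _ = tv := by
        rw [integral_indicator measurableSet_Ioc, Measure.restrict_restrict measurableSet_Ioc]
        have : Set.Ioc (0:ℝ) 1 ∩ Set.Ioi 0 = Set.Ioc 0 1 := by
          ext t; simp only [Set.mem_inter_iff, Set.mem_Ioc, Set.mem_Ioi, and_iff_left_iff_imp]
          exact fun h => h.1
        rw [this, setIntegral_const]
        simp

/-- Theorem 2: for any unaware classifier `g`,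
`Δ_mis(g) ≤ ½·E_{P₁}[r] + ½·E_{P₀}[r] + TV(P₁, P₀)`, where
`P(g(X)≠Y | S=s) = ∫ [1_{g(x)=1}(1−η_s(x)) + 1_{g(x)=0}η_s(x)] dP_s`,
`r(x) = |η₁(x) − η₀(x)|`, and `TV` is the total variation distance. -/
theorem stmt_3 {𝒳 : Type*} [MeasurableSpace 𝒳]
    (P₀ P₁ : Measure 𝒳) [IsProbabilityMeasure P₀] [IsProbabilityMeasure P₁]
    (η₀ η₁ : 𝒳 → ℝ) (hη₀ : Measurable η₀) (hη₁ : Measurable η₁)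
    (hb₀ : ∀ x, η₀ x ∈ Set.Icc (0 : ℝ) 1) (hb₁ : ∀ x, η₁ x ∈ Set.Icc (0 : ℝ) 1)
    (g : 𝒳 → Bool) (hg : Measurable g)
    (tv : ℝ)
    (htv : tv = ⨆ A : {A : Set 𝒳 // MeasurableSet A}, |(P₁ A.1).toReal - (P₀ A.1).toReal|) :
    |(∫ x, (if g x then 1 - η₁ x else η₁ x) ∂P₁)
        - ∫ x, (if g x then 1 - η₀ x else η₀ x) ∂P₀|
      ≤ (1/2) * (∫ x, |η₁ x - η₀ x| ∂P₁)
        + (1/2) * (∫ x, |η₁ x - η₀ x| ∂P₀) + tv := by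
  set f₁ : 𝒳 → ℝ := fun x => if g x then 1 - η₁ x else η₁ x with hf₁def
  set f₀ : 𝒳 → ℝ := fun x => if g x then 1 - η₀ x else η₀ x with hf₀def
  have hgm : MeasurableSet {x | g x = true} := hg (measurableSet_singleton true)
  have hf₁ : Measurable f₁ := Measurable.ite hgm (measurable_const.sub hη₁) hη₁
  have hf₀ : Measurable f₀ := Measurable.ite hgm (measurable_const.sub hη₀) hη₀
  have hb₁' : ∀ x, 0 ≤ f₁ x ∧ f₁ x ≤ 1 := by
    intro x; obtain ⟨a, b⟩ := hb₁ x
    simp only [hf₁def]; split <;> constructor <;> linarith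
  have hb₀' : ∀ x, 0 ≤ f₀ x ∧ f₀ x ≤ 1 := by
    intro x; obtain ⟨a, b⟩ := hb₀ x
    simp only [hf₀def]; split <;> constructor <;> linarith
  have hint : ∀ (h : 𝒳 → ℝ), Measurable h → (∀ x, 0 ≤ h x ∧ h x ≤ 1) →
      ∀ (μ : Measure 𝒳) [IsProbabilityMeasure μ], Integrable h μ := by
    intro h hh hb μ _
    refine (integrable_const (1 : ℝ)).mono' hh.aestronglyMeasurable ?_
    filter_upwards with x
    rw [Real.norm_eq_abs, abs_of_nonneg (hb x).1]
    exact (hb x).2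
  have habs : ∀ x, |f₁ x - f₀ x| = |η₁ x - η₀ x| := by
    intro x
    simp only [hf₁def, hf₀def]
    split
    · rw [show (1 - η₁ x) - (1 - η₀ x) = -(η₁ x - η₀ x) by ring, abs_neg]
    · rfl
  have hdiff : ∀ (μ : Measure 𝒳) [IsProbabilityMeasure μ],
      |(∫ x, f₁ x ∂μ) - ∫ x, f₀ x ∂μ| ≤ ∫ x, |η₁ x - η₀ x| ∂μ := by
    intro μ _
    rw [← integral_sub (hint f₁ hf₁ hb₁' μ) (hint f₀ hf₀ hb₀' μ)]
    calc |∫ x, (f₁ x - f₀ x) ∂μ| ≤ ∫ x, |f₁ x - f₀ x| ∂μ := by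
          simpa [Real.norm_eq_abs] using
            norm_integral_le_integral_norm (μ := μ) (f := fun x => f₁ x - f₀ x)
      _ = ∫ x, |η₁ x - η₀ x| ∂μ := by
          exact integral_congr_ae (Filter.Eventually.of_forall fun x => habs x)
  have htv₁ : |(∫ x, f₁ x ∂P₁) - ∫ x, f₁ x ∂P₀| ≤ tv := by
    rw [htv]
    exact tv_bound_aux P₀ P₁ f₁ hf₁ (fun x => (hb₁' x).1) (fun x => (hb₁' x).2)
  have htv₀ : |(∫ x, f₀ x ∂P₁) - ∫ x, f₀ x ∂P₀| ≤ tv := by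
    rw [htv]
    exact tv_bound_aux P₀ P₁ f₀ hf₀ (fun x => (hb₀' x).1) (fun x => (hb₀' x).2)
  have h1 := hdiff P₁
  have h0 := hdiff P₀
  set A₁ := ∫ x, f₁ x ∂P₁
  set A₀ := ∫ x, f₀ x ∂P₀
  set B := ∫ x, f₀ x ∂P₁
  set C := ∫ x, f₁ x ∂P₀
  have key : A₁ - A₀ = (1/2) * (A₁ - B) + (1/2) * (C - A₀) + (1/2) * (B - A₀) + (1/2) * (A₁ - C) := by
    ring
  calc |A₁ - A₀| ≤ (1/2) * |A₁ - B| + (1/2) * |C - A₀| + (1/2) * |B - A₀| + (1/2) * |A₁ - C| := by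
        rw [key]
        refine (abs_add_le _ _).trans ?_
        gcongr
        refine (abs_add_le _ _).trans ?_
        gcongr
        · refine (abs_add_le _ _).trans ?_
          gcongr <;> rw [abs_mul] <;> simp [abs_of_nonneg]
        · rw [abs_mul]; simp [abs_of_nonneg]
        · rw [abs_mul]; simp [abs_of_nonneg]
    _ ≤ (1/2) * (∫ x, |η₁ x - η₀ x| ∂P₁) + (1/2) * (∫ x, |η₁ x - η₀ x| ∂P₀) + tv := by
        have e1 : |A₁ - B| ≤ ∫ x, |η₁ x - η₀ x| ∂P₁ := h1
        have e0 : |C - A₀| ≤ ∫ x, |η₁ x - η₀ x| ∂P₀ := h0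
        nlinarith [htv₁, htv₀, abs_nonneg (A₁ - B), abs_nonneg (C - A₀)]
end

section
/- If the feature distribution is identical across sensitive groups (P_1 = P_0 = P), then for any unaware classifier g, Δ_mis(g) ≤ E_{x∼P}[r(x)]. -/
/-!
Given `X = x`, the error probabilities of `g` in the two groups differ by exactly
`|η₁ x - η₀ x|`, whichever label `g x` is; since both groups share the feature law `P`,
the claim is the triangle inequality for the integral against `P`.
-/

open MeasureTheory

section

variable {α : Type*} [MeasurableSpace α] {μ : Measure α}

lemma abs_ite_one_sub_sub_ite_one_sub (b : Bool) (a c : ℝ) :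
    |(if b then 1 - a else a) - (if b then 1 - c else c)| = |a - c| := by
  cases b
  · rfl
  · rw [if_pos rfl, if_pos rfl, sub_sub_sub_cancel_left, abs_sub_comm]

lemma integrable_of_measurable_of_mem_Icc [IsFiniteMeasure μ] {f : α → ℝ} (hf : Measurable f)
    (hb : ∀ x, f x ∈ Set.Icc (0 : ℝ) 1) : Integrable f μ :=
  .of_bound hf.aestronglyMeasurable 1 <| .of_forall fun x => by
    rw [Real.norm_of_nonneg (hb x).1]
    exact (hb x).2

lemma Integrable.ite_one_sub [IsFiniteMeasure μ] {η : α → ℝ} (hη : Integrable η μ)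
    {g : α → Bool} (hg : Measurable g) :
    Integrable (fun x => if g x then 1 - η x else η x) μ :=
  Integrable.piecewise (s := {x | g x = true}) (hg (measurableSet_singleton true))
    ((integrable_const 1).sub hη).integrableOn hη.integrableOn

lemma abs_integral_sub_integral_le_integral_abs_sub {f₀ f₁ : α → ℝ}
    (h₀ : Integrable f₀ μ) (h₁ : Integrable f₁ μ) :
    |(∫ x, f₁ x ∂μ) - ∫ x, f₀ x ∂μ| ≤ ∫ x, |f₁ x - f₀ x| ∂μ := by
  rw [← integral_sub h₁ h₀]
  exact abs_integral_le_integral_abs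

end

/-- If the feature distribution is identical across sensitive groups
(`P₁ = P₀ = P`), then for any unaware classifier `g`,
`Δ_mis(g) ≤ E_{x∼P}[r(x)]`. -/
theorem stmt_4 {𝒳 : Type*} [MeasurableSpace 𝒳]
    (P : Measure 𝒳) [IsProbabilityMeasure P]
    (η₀ η₁ : 𝒳 → ℝ) (hη₀ : Measurable η₀) (hη₁ : Measurable η₁)
    (hb₀ : ∀ x, η₀ x ∈ Set.Icc (0 : ℝ) 1) (hb₁ : ∀ x, η₁ x ∈ Set.Icc (0 : ℝ) 1)
    (g : 𝒳 → Bool) (hg : Measurable g) :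
    |(∫ x, (if g x then 1 - η₁ x else η₁ x) ∂P)
        - ∫ x, (if g x then 1 - η₀ x else η₀ x) ∂P|
      ≤ ∫ x, |η₁ x - η₀ x| ∂P := by
  have h₀ : Integrable (fun x => if g x then 1 - η₀ x else η₀ x) P :=
    Integrable.ite_one_sub (integrable_of_measurable_of_mem_Icc hη₀ hb₀) hg
  have h₁ : Integrable (fun x => if g x then 1 - η₁ x else η₁ x) P :=
    Integrable.ite_one_sub (integrable_of_measurable_of_mem_Icc hη₁ hb₁) hg
  calc _ ≤ ∫ x, |(if g x then 1 - η₁ x else η₁ x) - (if g x then 1 - η₀ x else η₀ x)| ∂P :=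
        abs_integral_sub_integral_le_integral_abs_sub h₀ h₁
    _ = ∫ x, |η₁ x - η₀ x| ∂P := by
        simp only [abs_ite_one_sub_sub_ite_one_sub]
end

section
/- Suppose P_1 = P_0 = P, and there is a measurable subset G ⊆ 𝒳 with P(G) > γ > 0 on which η_1(x) > η_0(x) for all x ∈ G. Let g: 𝒳 → [0,1] be a stochastic unaware classifier with inf_{x∈G} g(x) > 1/2. Then there exists κ > 0 such that the subpopulation fairness gap satisfies Δ_sub-mis(g, γ) := max_{G': P(G')≥γ} Δ_mis(g | X ∈ G') > κ · E[r(X) | X ∈ G]. -/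
open MeasureTheory

/-- Theorem 3: suppose `P₁ = P₀ = P`, and there is a measurable `G` with
`P(G) > γ > 0` on which `η₁ > η₀`.  For any stochastic unaware classifier
`g : 𝒳 → [0,1]` with `inf_{x∈G} g(x) > 1/2`, there exists `κ > 0` such that
`Δ_sub-mis(g, γ) = sup_{G' : P(G')≥γ} Δ_mis(g | X∈G') > κ·E[r(X) | X∈G]`,
where `Δ_mis(g | X∈G') = |∫_{G'} (2g−1)(η₁−η₀) dP| / P(G')`. -/
theorem stmt_5 {𝒳 : Type*} [MeasurableSpace 𝒳]
    (P : Measure 𝒳) [IsProbabilityMeasure P]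
    (η₀ η₁ : 𝒳 → ℝ) (hη₀ : Measurable η₀) (hη₁ : Measurable η₁)
    (hb₀ : ∀ x, η₀ x ∈ Set.Icc (0 : ℝ) 1) (hb₁ : ∀ x, η₁ x ∈ Set.Icc (0 : ℝ) 1)
    (γ : ℝ) (hγ : 0 < γ)
    (G : Set 𝒳) (hG : MeasurableSet G) (hPG : γ < (P G).toReal)
    (hlt : ∀ x ∈ G, η₀ x < η₁ x)
    (g : 𝒳 → ℝ) (hg : Measurable g) (hgb : ∀ x, g x ∈ Set.Icc (0 : ℝ) 1)
    (hinf : 1/2 < sInf (g '' G)) :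
    ∃ κ > (0 : ℝ),
      κ * ((∫ x in G, |η₁ x - η₀ x| ∂P) / (P G).toReal)
        < ⨆ G' : {G' : Set 𝒳 // MeasurableSet G' ∧ γ ≤ (P G').toReal},
            |∫ x in G'.1, (2 * g x - 1) * (η₁ x - η₀ x) ∂P| / (P G'.1).toReal := by
  set c : ℝ := 2 * sInf (g '' G) - 1 with hc
  have hc0 : 0 < c := by simp only [hc]; linarith
  have hPG0 : (0:ℝ) < (P G).toReal := lt_trans hγ hPG
  set f : 𝒳 → ℝ := fun x => (2 * g x - 1) * (η₁ x - η₀ x) with hf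
  have hfm : Measurable f := by
    apply Measurable.mul
    · exact (hg.const_mul 2).sub measurable_const
    · exact hη₁.sub hη₀
  have hfb : ∀ x, ‖f x‖ ≤ 1 := by
    intro x
    have h1 := hgb x; have h2 := hb₀ x; have h3 := hb₁ x
    simp only [Set.mem_Icc] at h1 h2 h3
    rw [Real.norm_eq_abs, abs_mul]
    have : |2 * g x - 1| ≤ 1 := by rw [abs_le]; constructor <;> linarith
    have : |η₁ x - η₀ x| ≤ 1 := by rw [abs_le]; constructor <;> linarith
    nlinarith [abs_nonneg (2 * g x - 1), abs_nonneg (η₁ x - η₀ x)]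
  have hfint : ∀ s : Set 𝒳, IntegrableOn f s P := by
    intro s
    exact (Integrable.mono' (integrable_const 1) hfm.aestronglyMeasurable
      (Filter.Eventually.of_forall hfb)).integrableOn
  have hbddbelow : BddBelow (g '' G) := by
    refine ⟨0, ?_⟩
    rintro y ⟨x, _, rfl⟩
    exact (hgb x).1
  have hpt : ∀ x ∈ G, c * |η₁ x - η₀ x| ≤ f x := by
    intro x hx
    have h1 : sInf (g '' G) ≤ g x := csInf_le hbddbelow ⟨x, hx, rfl⟩
    have h2 : 0 < η₁ x - η₀ x := sub_pos.2 (hlt x hx)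
    have habs : |η₁ x - η₀ x| = η₁ x - η₀ x := abs_of_pos h2
    rw [habs]
    have hcle : c ≤ 2 * g x - 1 := by simp only [hc]; linarith
    show c * (η₁ x - η₀ x) ≤ (2 * g x - 1) * (η₁ x - η₀ x)
    nlinarith
  have hrint : IntegrableOn (fun x => |η₁ x - η₀ x|) G P := by
    refine (Integrable.mono' (integrable_const 1)
      ((hη₁.sub hη₀).abs.aestronglyMeasurable) (Filter.Eventually.of_forall ?_)).integrableOn
    intro x
    have h2 := hb₀ x; have h3 := hb₁ x
    simp only [Set.mem_Icc] at h2 h3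
    rw [Real.norm_eq_abs, abs_abs, abs_le]
    constructor <;> simp only [Pi.sub_apply] <;> linarith
  have hrintc : IntegrableOn (fun x => c * |η₁ x - η₀ x|) G P := hrint.const_mul c
  have hmono : c * ∫ x in G, |η₁ x - η₀ x| ∂P ≤ ∫ x in G, f x ∂P := by
    rw [← integral_const_mul]
    exact setIntegral_mono_on hrintc (hfint G) hG hpt
  have hfnn : 0 ≤ᵐ[P.restrict G] f := by
    refine (ae_restrict_mem hG).mono (fun x hx => ?_)
    exact le_trans (by positivity) (hpt x hx)
  have hIf : 0 < ∫ x in G, f x ∂P := by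
    rw [setIntegral_pos_iff_support_of_nonneg_ae hfnn (hfint G)]
    have hsub : G ⊆ Function.support f ∩ G := by
      intro x hx
      refine ⟨?_, hx⟩
      have h1 := hpt x hx
      have h2 : 0 < η₁ x - η₀ x := sub_pos.2 (hlt x hx)
      have : 0 < f x := lt_of_lt_of_le (by positivity) h1
      exact ne_of_gt this
    calc (0 : ENNReal) < P G := by
          have : P G ≠ 0 := by
            intro h; rw [h] at hPG0; simp at hPG0
          exact pos_iff_ne_zero.2 this
      _ ≤ P (Function.support f ∩ G) := measure_mono hsub
  -- the element G of the index type
  set T := {G' : Set 𝒳 // MeasurableSet G' ∧ γ ≤ (P G').toReal}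
  set F : T → ℝ := fun G' => |∫ x in G'.1, f x ∂P| / (P G'.1).toReal with hF
  have hbddabove : BddAbove (Set.range F) := by
    refine ⟨1, ?_⟩
    rintro y ⟨⟨s, hs, hsγ⟩, rfl⟩
    have hs0 : (0:ℝ) < (P s).toReal := lt_of_lt_of_le hγ hsγ
    have := norm_setIntegral_le_of_norm_le_const (C := 1)
      (measure_lt_top P s) (fun x _ => hfb x)
    rw [Real.norm_eq_abs, one_mul, measureReal_def] at this
    simp only [hF]
    rw [div_le_one hs0]
    linarith
  have hle : F ⟨G, hG, le_of_lt hPG⟩ ≤ ⨆ G' : T, F G' := le_ciSup hbddabove _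
  refine ⟨c / 2, by linarith, ?_⟩
  have hIle : ∫ x in G, |η₁ x - η₀ x| ∂P ≤ (∫ x in G, f x ∂P) / c := by
    rw [le_div_iff₀ hc0]
    linarith [hmono]
  calc c / 2 * ((∫ x in G, |η₁ x - η₀ x| ∂P) / (P G).toReal)
      ≤ c / 2 * (((∫ x in G, f x ∂P) / c) / (P G).toReal) := by
        apply mul_le_mul_of_nonneg_left _ (by linarith)
        gcongr
    _ = (∫ x in G, f x ∂P) / 2 / (P G).toReal := by
        field_simp
    _ < (∫ x in G, f x ∂P) / (P G).toReal := by
        rw [div_lt_div_iff₀ hPG0 hPG0]; nlinarith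
    _ ≤ |∫ x in G, f x ∂P| / (P G).toReal := by
        gcongr; exact le_abs_self _
    _ ≤ ⨆ G' : T, F G' := hle
end

section
/- Let f, h: 𝒳 → [0,1] be measurable and c: 𝒳 → [−1,1] measurable, and let P, Q be probability measures on 𝒳. Then |∫ c·f dP − ∫ c·h dQ| ≤ (1/2)∫|f−h| dP + (1/2)∫|f−h| dQ + 2·TV(P, Q), where TV(P,Q) = sup_A |P(A) − Q(A)|. -/
open MeasureTheory ENNReal

lemma tv_key {𝒳 : Type*} [MeasurableSpace 𝒳]
    (P Q : Measure 𝒳) [IsProbabilityMeasure P] [IsProbabilityMeasure Q]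
    (g : 𝒳 → ℝ) (hg : Measurable g) (hgb : ∀ x, |g x| ≤ 1) :
    |(∫ x, g x ∂P) - ∫ x, g x ∂Q|
      ≤ 2 * ⨆ A : {A : Set 𝒳 // MeasurableSet A}, |(P A.1).toReal - (Q A.1).toReal| := by
  set ν : Measure 𝒳 := P + Q with hν
  have hPν : P ≪ ν := Measure.AbsolutelyContinuous.rfl.add_right _
  have hQν : Q ≪ ν := Measure.absolutelyContinuous_of_le (Measure.le_add_left le_rfl)
  set p : 𝒳 → ℝ≥0∞ := P.rnDeriv ν with hp
  set q : 𝒳 → ℝ≥0∞ := Q.rnDeriv ν with hq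
  have hpm : Measurable p := Measure.measurable_rnDeriv _ _
  have hqm : Measurable q := Measure.measurable_rnDeriv _ _
  have hpint : Integrable (fun x => (p x).toReal) ν := Measure.integrable_toReal_rnDeriv
  have hqint : Integrable (fun x => (q x).toReal) ν := Measure.integrable_toReal_rnDeriv
  -- bddAbove of the sup
  have hbdd : BddAbove (Set.range fun A : {A : Set 𝒳 // MeasurableSet A} =>
      |(P A.1).toReal - (Q A.1).toReal|) := by
    refine ⟨1, ?_⟩
    rintro r ⟨A, rfl⟩
    have h1 : (P A.1).toReal ≤ 1 := by
      simpa using ENNReal.toReal_mono (by simp) (prob_le_one (μ := P) (s := A.1))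
    have h2 : (Q A.1).toReal ≤ 1 := by
      simpa using ENNReal.toReal_mono (by simp) (prob_le_one (μ := Q) (s := A.1))
    have h1' : 0 ≤ (P A.1).toReal := ENNReal.toReal_nonneg
    have h2' : 0 ≤ (Q A.1).toReal := ENNReal.toReal_nonneg
    rw [abs_le]; constructor <;> linarith
  have hle : ∀ (A : Set 𝒳), MeasurableSet A → |(P A).toReal - (Q A).toReal|
      ≤ ⨆ A : {A : Set 𝒳 // MeasurableSet A}, |(P A.1).toReal - (Q A.1).toReal| := by
    intro A hA
    exact le_ciSup hbdd ⟨A, hA⟩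
  -- rewrite integrals
  have hIP : ∫ x, g x ∂P = ∫ x, (p x).toReal • g x ∂ν :=
    (integral_rnDeriv_smul hPν).symm
  have hIQ : ∫ x, g x ∂Q = ∫ x, (q x).toReal • g x ∂ν :=
    (integral_rnDeriv_smul hQν).symm
  have hgP : Integrable (fun x => (p x).toReal • g x) ν := by
    refine hpint.bdd_mul (hg.aestronglyMeasurable) (ae_of_all _ hgb) |>.congr ?_
    · exact ae_of_all _ fun x => by simp [mul_comm, smul_eq_mul]
  have hgQ : Integrable (fun x => (q x).toReal • g x) ν := by
    refine hqint.bdd_mul (hg.aestronglyMeasurable) (ae_of_all _ hgb) |>.congr ?_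
    · exact ae_of_all _ fun x => by simp [mul_comm, smul_eq_mul]
  rw [hIP, hIQ, ← integral_sub hgP hgQ]
  have hbound : |∫ x, ((p x).toReal • g x - (q x).toReal • g x) ∂ν|
      ≤ ∫ x, |(p x).toReal - (q x).toReal| ∂ν := by
    rw [← Real.norm_eq_abs]
    refine (norm_integral_le_integral_norm _).trans ?_
    simp_rw [Real.norm_eq_abs]
    refine integral_mono_of_nonneg (ae_of_all _ fun x => abs_nonneg _) (hpint.sub hqint).abs ?_
    refine ae_of_all _ fun x => ?_
    have : (p x).toReal • g x - (q x).toReal • g x = ((p x).toReal - (q x).toReal) * g x := by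
      simp [smul_eq_mul, sub_mul]
    show |(p x).toReal • g x - (q x).toReal • g x| ≤ |(p x).toReal - (q x).toReal|
    rw [this, abs_mul]
    calc |(p x).toReal - (q x).toReal| * |g x| ≤ |(p x).toReal - (q x).toReal| * 1 := by
          exact mul_le_mul_of_nonneg_left (hgb x) (abs_nonneg _)
      _ = _ := by ring
  refine hbound.trans ?_
  -- split at A = {x | q x ≤ p x}
  set A : Set 𝒳 := {x | q x ≤ p x} with hA
  have hAm : MeasurableSet A := measurableSet_le hqm hpm
  have hsplit : ∫ x, |(p x).toReal - (q x).toReal| ∂ν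
      = (∫ x in A, |(p x).toReal - (q x).toReal| ∂ν)
        + ∫ x in Aᶜ, |(p x).toReal - (q x).toReal| ∂ν :=
    (integral_add_compl hAm (hpint.sub hqint).abs).symm
  have hplt : ∀ᵐ x ∂ν, p x < ∞ := Measure.rnDeriv_lt_top _ _
  have hqlt : ∀ᵐ x ∂ν, q x < ∞ := Measure.rnDeriv_lt_top _ _
  have hA1 : ∫ x in A, |(p x).toReal - (q x).toReal| ∂ν
      = (P A).toReal - (Q A).toReal := by
    rw [← measureReal_def P, ← measureReal_def Q, ← Measure.setIntegral_toReal_rnDeriv hPν A, ← Measure.setIntegral_toReal_rnDeriv hQν A,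
      ← integral_sub (hpint.integrableOn) (hqint.integrableOn)]
    refine setIntegral_congr_ae hAm ?_
    filter_upwards [hplt, hqlt] with x hpx hqx hxA
    rw [abs_of_nonneg]
    exact sub_nonneg.2 (ENNReal.toReal_mono hpx.ne hxA)
  have hA2 : ∫ x in Aᶜ, |(p x).toReal - (q x).toReal| ∂ν
      = (Q Aᶜ).toReal - (P Aᶜ).toReal := by
    rw [← measureReal_def P, ← measureReal_def Q, ← Measure.setIntegral_toReal_rnDeriv hPν Aᶜ, ← Measure.setIntegral_toReal_rnDeriv hQν Aᶜ,
      ← integral_sub (hqint.integrableOn) (hpint.integrableOn)]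
    refine setIntegral_congr_ae hAm.compl ?_
    filter_upwards [hplt, hqlt] with x hpx hqx hxA
    rw [abs_sub_comm, abs_of_nonneg]
    have : p x ≤ q x := le_of_not_ge hxA
    exact sub_nonneg.2 (ENNReal.toReal_mono hqx.ne this)
  rw [hsplit, hA1, hA2]
  have h1 := hle A hAm
  have h2 := hle Aᶜ hAm.compl
  rw [abs_sub_comm] at h2
  have := (le_abs_self _).trans h1
  have := (le_abs_self _).trans h2
  linarith
/-- Key decomposition inequality: for measurable `f, h : 𝒳 → [0,1]`,
`c : 𝒳 → [−1,1]`, and probability measures `P, Q`,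
`|∫ c·f dP − ∫ c·h dQ| ≤ ½∫|f−h| dP + ½∫|f−h| dQ + 2·TV(P,Q)`. -/
theorem stmt_7 {𝒳 : Type*} [MeasurableSpace 𝒳]
    (P Q : Measure 𝒳) [IsProbabilityMeasure P] [IsProbabilityMeasure Q]
    (f h : 𝒳 → ℝ) (hf : Measurable f) (hh : Measurable h)
    (hfb : ∀ x, f x ∈ Set.Icc (0 : ℝ) 1) (hhb : ∀ x, h x ∈ Set.Icc (0 : ℝ) 1)
    (c : 𝒳 → ℝ) (hc : Measurable c) (hcb : ∀ x, |c x| ≤ 1)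
    (tv : ℝ)
    (htv : tv = ⨆ A : {A : Set 𝒳 // MeasurableSet A}, |(P A.1).toReal - (Q A.1).toReal|) :
    |(∫ x, c x * f x ∂P) - ∫ x, c x * h x ∂Q|
      ≤ (1/2) * (∫ x, |f x - h x| ∂P) + (1/2) * (∫ x, |f x - h x| ∂Q) + 2 * tv := by
  have hint : ∀ (μ : Measure 𝒳), IsFiniteMeasure μ → ∀ (u : 𝒳 → ℝ), Measurable u →
      (∀ x, |u x| ≤ 1) → Integrable u μ := by
    intro μ hμ u hu hb
    exact (integrable_const 1).mono' hu.aestronglyMeasurable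
      (ae_of_all _ fun x => by simpa using hb x)
  set g : 𝒳 → ℝ := fun x => c x * ((f x + h x) / 2) with hgdef
  set a : 𝒳 → ℝ := fun x => c x * ((f x - h x) / 2) with hadef
  have hgm : Measurable g := hc.mul ((hf.add hh).div_const 2)
  have ham : Measurable a := hc.mul ((hf.sub hh).div_const 2)
  have hgb : ∀ x, |g x| ≤ 1 := by
    intro x
    have h1 := (hfb x).1; have h2 := (hfb x).2
    have h3 := (hhb x).1; have h4 := (hhb x).2
    rw [hgdef, abs_mul]
    calc |c x| * |(f x + h x) / 2| ≤ 1 * 1 := by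
          refine mul_le_mul (hcb x) ?_ (abs_nonneg _) zero_le_one
          rw [abs_le]; constructor <;> [linarith; linarith]
      _ = 1 := one_mul 1
  have hab : ∀ x, |a x| ≤ 1 := by
    intro x
    have h1 := (hfb x).1; have h2 := (hfb x).2
    have h3 := (hhb x).1; have h4 := (hhb x).2
    rw [hadef, abs_mul]
    calc |c x| * |(f x - h x) / 2| ≤ 1 * 1 := by
          refine mul_le_mul (hcb x) ?_ (abs_nonneg _) zero_le_one
          rw [abs_le]; constructor <;> [linarith; linarith]
      _ = 1 := one_mul 1
  have key : |(∫ x, g x ∂P) - ∫ x, g x ∂Q| ≤ 2 * tv := by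
    rw [htv]; exact tv_key P Q g hgm hgb
  -- decomposition of the integrals
  have hdecP : ∫ x, c x * f x ∂P = (∫ x, g x ∂P) + ∫ x, a x ∂P := by
    rw [← integral_add (hint P inferInstance g hgm hgb) (hint P inferInstance a ham hab)]
    refine integral_congr_ae (ae_of_all _ fun x => ?_)
    simp only [hgdef, hadef]; ring
  have hdecQ : ∫ x, c x * h x ∂Q = (∫ x, g x ∂Q) - ∫ x, a x ∂Q := by
    rw [← integral_sub (hint Q inferInstance g hgm hgb) (hint Q inferInstance a ham hab)]
    refine integral_congr_ae (ae_of_all _ fun x => ?_)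
    simp only [hgdef, hadef]; ring
  have habs : ∀ (μ : Measure 𝒳), IsProbabilityMeasure μ →
      |∫ x, a x ∂μ| ≤ (1/2) * ∫ x, |f x - h x| ∂μ := by
    intro μ hμ
    rw [← Real.norm_eq_abs]
    refine (norm_integral_le_integral_norm _).trans ?_
    rw [← integral_const_mul]
    refine integral_mono_of_nonneg (ae_of_all _ fun x => norm_nonneg _)
      ((hint μ inferInstance (fun x => |f x - h x|) (hf.sub hh).abs ?_).const_mul _)
      (ae_of_all _ fun x => ?_)
    · intro x
      have h1 := (hfb x).1; have h2 := (hfb x).2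
      have h3 := (hhb x).1; have h4 := (hhb x).2
      rw [abs_abs, abs_le]; constructor <;> linarith
    · simp only [hadef, Real.norm_eq_abs, abs_mul]
      rw [abs_div]
      calc |c x| * (|f x - h x| / |(2:ℝ)|) ≤ 1 * (|f x - h x| / 2) := by
            rw [abs_two]
            exact mul_le_mul_of_nonneg_right (hcb x) (by positivity)
        _ = 1/2 * |f x - h x| := by ring
  have hP := habs P inferInstance
  have hQ := habs Q inferInstance
  calc |(∫ x, c x * f x ∂P) - ∫ x, c x * h x ∂Q|
      = |((∫ x, g x ∂P) - ∫ x, g x ∂Q) + (∫ x, a x ∂P) + ∫ x, a x ∂Q| := by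
        rw [hdecP, hdecQ]; congr 1; ring
    _ ≤ |(∫ x, g x ∂P) - ∫ x, g x ∂Q| + |∫ x, a x ∂P| + |∫ x, a x ∂Q| := by
        exact (abs_add_le _ _).trans (add_le_add_left (abs_add_le _ _) _)
    _ ≤ 2 * tv + (1/2) * (∫ x, |f x - h x| ∂P) + (1/2) * (∫ x, |f x - h x| ∂Q) := by
        exact add_le_add (add_le_add key hP) hQ
    _ = _ := by ring
end
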